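/- The polynomial α_4(s) = (35/16)s⁴ − (35/8)s³ + (7/2)s² − (13/8)s + 5/16 factors as α_4(s) = (1/16)(s − 1)(35s³ − 35s² + 21s − 5), and every complex root z of 35s³ − 35s² + 21s − 5 satisfies |z| < 1. Consequently, 1 is a simple root of α_4 and all other roots lie strictly inside the unit circle, so the 4-step LIL method satisfies the Dahlquist root condition (zero-stability). -/

import Mathlib

/-!
Multiplying the cubic `p(z) = 35z³ − 35z² + 21z − 5` by `z + 1` gives `35z⁴ = 14z² − 16z + 5`,
and the triangle inequality then bounds every root by `|z| ≤ 1`, since `35 = 14 + 16 + 5`.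
A root on the unit circle would also be a root of the reversed polynomial (as `z̄ = 1/z`), and
eliminating `z³` between the two leaves `z² − 2z + 15/7 = 0`, whose roots have modulus `√(15/7)`.
-/

open Polynomial

/-- First characteristic polynomial of the 4-step LIL method, over `ℂ`. -/
noncomputable def lilAlpha4 : Polynomial ℂ :=
  C (35 / 16) * X ^ 4 - C (35 / 8) * X ^ 3 + C (7 / 2) * X ^ 2
    - C (13 / 8) * X + C (5 / 16)

open ComplexConjugate

theorem Complex.normSq_eq_of_sq_add_mul_add_eq_zero {b c : ℝ} (hbc : b ^ 2 < 4 * c) {z : ℂ}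
    (hz : z ^ 2 + b * z + c = 0) : Complex.normSq z = c := by
  have hz' : conj z ^ 2 + b * conj z + c = 0 := by
    simpa using congrArg conj hz
  have hnonreal : conj z ≠ z := by
    rintro hconj
    obtain ⟨x, rfl⟩ := Complex.conj_eq_iff_real.mp hconj
    have hx : x ^ 2 + b * x + c = 0 := by exact_mod_cast hz
    nlinarith [sq_nonneg (2 * x + b)]
  have hsum : z + conj z = -b := by
    have : (z - conj z) * (z + conj z + b) = 0 := by linear_combination hz - hz'
    linear_combination (mul_eq_zero.mp this).resolve_left (sub_ne_zero.mpr hnonreal.symm)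
  have hprod : z * conj z = c := by linear_combination z * hsum - hz
  exact_mod_cast (Complex.mul_conj z).symm.trans hprod

noncomputable def lilCubic : ℂ[X] :=
  C 35 * X ^ 3 - C 35 * X ^ 2 + C 21 * X - C 5

@[simp]
theorem eval_lilCubic (z : ℂ) : lilCubic.eval z = 35 * z ^ 3 - 35 * z ^ 2 + 21 * z - 5 := by
  simp [lilCubic]

theorem lilCubic_norm_le_one {z : ℂ} (hz : 35 * z ^ 3 - 35 * z ^ 2 + 21 * z - 5 = 0) :
    ‖z‖ ≤ 1 := by
  have hquartic : 35 * z ^ 4 = 14 * z ^ 2 - 16 * z + 5 := by linear_combination (z + 1) * hz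
  have hbound : 35 * ‖z‖ ^ 4 ≤ 14 * ‖z‖ ^ 2 + 16 * ‖z‖ + 5 := by
    calc 35 * ‖z‖ ^ 4 = ‖14 * z ^ 2 - 16 * z + 5‖ := by rw [← hquartic]; simp
      _ ≤ ‖14 * z ^ 2 - 16 * z‖ + ‖(5 : ℂ)‖ := norm_add_le _ _
      _ ≤ ‖14 * z ^ 2‖ + ‖16 * z‖ + ‖(5 : ℂ)‖ := by gcongr; exact norm_sub_le _ _
      _ = 14 * ‖z‖ ^ 2 + 16 * ‖z‖ + 5 := by simp
  by_contra! h
  nlinarith [mul_pos (sub_pos.mpr h)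
    (by positivity : 0 < 35 * ‖z‖ ^ 3 + 35 * ‖z‖ ^ 2 + 21 * ‖z‖ + 5)]

theorem lilCubic_norm_ne_one {z : ℂ} (hz : 35 * z ^ 3 - 35 * z ^ 2 + 21 * z - 5 = 0) :
    ‖z‖ ≠ 1 := by
  intro h1
  have hunit : z * conj z = 1 := by
    rw [Complex.mul_conj, Complex.normSq_eq_norm_sq, h1]; norm_num
  have hconj : 35 * conj z ^ 3 - 35 * conj z ^ 2 + 21 * conj z - 5 = 0 := by
    simpa [map_ofNat] using congrArg conj hz
  have hreversed : 35 - 35 * z + 21 * z ^ 2 - 5 * z ^ 3 = 0 := by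
    linear_combination z ^ 3 * hconj
      - (35 * ((z * conj z) ^ 2 + z * conj z + 1) - 35 * z * (z * conj z + 1) + 21 * z ^ 2)
        * hunit
  have hquad : z ^ 2 + (-2 : ℝ) * z + (15 / 7 : ℝ) = 0 := by
    push_cast
    linear_combination (5 * hz + 35 * hreversed) / 560
  have hnormSq := Complex.normSq_eq_of_sq_add_mul_add_eq_zero (by norm_num) hquad
  rw [Complex.normSq_eq_norm_sq, h1] at hnormSq
  norm_num at hnormSq

theorem lilCubic_norm_lt_one {z : ℂ} (hz : 35 * z ^ 3 - 35 * z ^ 2 + 21 * z - 5 = 0) :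
    ‖z‖ < 1 :=
  (lilCubic_norm_le_one hz).lt_of_ne (lilCubic_norm_ne_one hz)

theorem lilAlpha4_eq : lilAlpha4 = C (1 / 16) * (X - C 1) * lilCubic :=
  Polynomial.funext fun z => by simp [lilAlpha4]; ring

theorem rootMultiplicity_one_lilAlpha4 : lilAlpha4.rootMultiplicity 1 = 1 := by
  have hnotroot : ¬(C (1 / 16) * lilCubic).IsRoot 1 := by norm_num [IsRoot]
  have hne : C (1 / 16) * lilCubic ≠ 0 := fun h => hnotroot (by rw [h]; exact eval_zero)
  rw [lilAlpha4_eq, mul_right_comm, ← pow_one (X - C 1), rootMultiplicity_mul_X_sub_C_pow hne,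
    rootMultiplicity_eq_zero hnotroot]

/-- `α₄(s)` factors as `(1/16)(s − 1)(35s³ − 35s² + 21s − 5)`, every complex root
`z` of `35s³ − 35s² + 21s − 5` satisfies `|z| < 1`, `1` is a simple root of `α₄`,
and all other roots lie strictly inside the unit circle: the 4-step LIL method
satisfies the Dahlquist root condition (zero-stability). -/
theorem lil_root_condition_m4 :
    lilAlpha4 = C (1 / 16) * (X - C 1) * (C 35 * X ^ 3 - C 35 * X ^ 2 + C 21 * X - C 5) ∧
    (∀ z : ℂ, 35 * z ^ 3 - 35 * z ^ 2 + 21 * z - 5 = 0 → ‖z‖ < 1) ∧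
    lilAlpha4.rootMultiplicity 1 = 1 ∧
    (∀ z : ℂ, lilAlpha4.eval z = 0 → z ≠ 1 → ‖z‖ < 1) := by
  refine ⟨lilAlpha4_eq, fun z => lilCubic_norm_lt_one, rootMultiplicity_one_lilAlpha4, ?_⟩
  intro z hz hz1
  rw [lilAlpha4_eq, eval_mul, eval_mul] at hz
  exact lilCubic_norm_lt_one (by simpa [sub_eq_zero, hz1] using hz)
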